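/- arXiv:2104.04293 — 2 statements merged into one kernel-verified Lean document; each statement's English description precedes it below -/
import Mathlib

section
/- Let G be a finite simple graph with positive integer edge weights, base ⊆ V a set of vertices, R a set of positive integers (radii) such that for all distinct vertices s,d of G in the same connected component there exists r ∈ R with r < d_G(s,d) ≤ 2r, and for each r ∈ R a set cover_r ⊆ V that intersects the vertex set of every shortest path P in G with r < |P| ≤ 2r whose vertex set is disjoint from base. Define hubs(u) = base ∪ ⋃_{r ∈ R} (N_{2r}^{G∖base}(u) ∩ cover_r) for each vertex u. Then for every pair of distinct vertices s,d of G in the same connected component and every shortest path P from s to d in G, the vertex set of P intersects hubs(s). -/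
open SimpleGraph

/-- The weight of a walk: the sum of the weights of its edges (darts). -/
def walkWeight {V : Type*} {G : SimpleGraph V} (wt : V → V → ℕ) {u v : V}
    (p : G.Walk u v) : ℕ :=
  (p.darts.map fun d => wt d.toProd.1 d.toProd.2).sum

/-- The weighted distance: the minimum weight of a walk from `u` to `v`. -/
noncomputable def wdist {V : Type*} (G : SimpleGraph V) (wt : V → V → ℕ) (u v : V) : ℕ :=
  sInf {n | ∃ p : G.Walk u v, walkWeight wt p = n}

/-- The subgraph of `G` induced on the complement of `S` (vertices of `S` are isolated). -/
def delVerts {V : Type*} (G : SimpleGraph V) (S : Set V) : SimpleGraph V where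
  Adj a b := G.Adj a b ∧ a ∉ S ∧ b ∉ S
  symm := by constructor; intro a b h; exact ⟨h.1.symm, h.2.2, h.2.1⟩
  loopless := by constructor; intro a h; exact G.ne_of_adj h.1 rfl

/-- The ball `N_x^{G∖S}(u)`: vertices of `G∖S` at `wdist` at most `x` from `u` in `G∖S`. -/
def ball {V : Type*} (G : SimpleGraph V) (wt : V → V → ℕ) (S : Set V) (u : V)
    (x : ℕ) : Set V :=
  {v | (delVerts G S).Reachable u v ∧ wdist (delVerts G S) wt u v ≤ x}

/-- The hub set `hubs(u) = base ∪ ⋃_{r ∈ R} (N_{2r}^{G∖base}(u) ∩ cover_r)`. -/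
def hubs {V : Type*} (G : SimpleGraph V) (wt : V → V → ℕ) (base : Set V) (R : Set ℕ)
    (cover : ℕ → Set V) (u : V) : Set V :=
  base ∪ ⋃ r ∈ R, ball G wt base u (2 * r) ∩ cover r


lemma walkWeight_cons {V : Type*} {G : SimpleGraph V} (wt : V → V → ℕ) {u v w : V}
    (h : G.Adj u v) (p : G.Walk v w) :
    walkWeight wt (SimpleGraph.Walk.cons h p) = wt u v + walkWeight wt p := by
  simp [walkWeight]

lemma exists_delVerts_walk {V : Type*} {G : SimpleGraph V} (wt : V → V → ℕ)
    (base : Set V) {u v : V} (p : G.Walk u v) (hp : ∀ x ∈ p.support, x ∉ base) :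
    ∃ q : (delVerts G base).Walk u v, walkWeight wt q = walkWeight wt p := by
  induction p with
  | nil => exact ⟨SimpleGraph.Walk.nil, rfl⟩
  | cons h p ih =>
    rename_i a b c
    obtain ⟨q, hq⟩ := ih (fun x hx => hp x (by simp [hx]))
    refine ⟨SimpleGraph.Walk.cons ⟨h, hp a (by simp), hp b (by simp)⟩ q, ?_⟩
    rw [walkWeight_cons]
    exact (walkWeight_cons wt _ q).trans (by rw [hq])

theorem stmt0 {V : Type*} [Fintype V] (G : SimpleGraph V) (wt : V → V → ℕ)
    (hsymm : ∀ a b, wt a b = wt b a)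
    (hpos : ∀ a b, G.Adj a b → 0 < wt a b)
    (base : Set V) (R : Set ℕ) (hRpos : ∀ r ∈ R, 0 < r)
    (hR : ∀ s d : V, s ≠ d → G.Reachable s d →
      ∃ r ∈ R, r < wdist G wt s d ∧ wdist G wt s d ≤ 2 * r)
    (cover : ℕ → Set V)
    (hcover : ∀ r ∈ R, ∀ (a b : V) (P : G.Walk a b), P.IsPath →
      walkWeight wt P = wdist G wt a b →
      r < walkWeight wt P → walkWeight wt P ≤ 2 * r →
      (∀ x ∈ P.support, x ∉ base) →
      ∃ x ∈ P.support, x ∈ cover r)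
    (s d : V) (hsd : s ≠ d) (hreach : G.Reachable s d)
    (P : G.Walk s d) (hP : P.IsPath) (hPw : walkWeight wt P = wdist G wt s d) :
    ∃ x ∈ P.support, x ∈ hubs G wt base R cover s := by
  
  classical
  by_cases hbase : ∀ x ∈ P.support, x ∉ base
  · obtain ⟨r, hrR, hr1, hr2⟩ := hR s d hsd hreach
    rw [← hPw] at hr1 hr2
    obtain ⟨x, hxP, hxc⟩ := hcover r hrR s d P hP hPw hr1 hr2 hbase
    refine ⟨x, hxP, Or.inr ?_⟩
    refine Set.mem_biUnion hrR ⟨?_, hxc⟩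
    -- x ∈ ball
    have hspec := P.take_spec hxP
    set q := P.takeUntil x hxP with hqdef
    have hsub : ∀ y ∈ q.support, y ∉ base := fun y hy =>
      hbase y (P.support_takeUntil_subset hxP hy)
    obtain ⟨q', hq'⟩ := exists_delVerts_walk wt base q hsub
    have hle : walkWeight wt q ≤ walkWeight wt P := by
      rw [← hspec]
      simp only [walkWeight, SimpleGraph.Walk.darts_append, List.map_append, List.sum_append]
      exact Nat.le_add_right _ _
    refine ⟨q'.reachable, ?_⟩
    calc wdist (delVerts G base) wt s x ≤ walkWeight wt q' := Nat.sInf_le ⟨q', rfl⟩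
      _ = walkWeight wt q := hq'
      _ ≤ walkWeight wt P := hle
      _ ≤ 2 * r := hr2
  · push_neg at hbase
    obtain ⟨x, hxP, hxb⟩ := hbase
    exact ⟨x, hxP, Or.inl hxb⟩
end

section
/- Let G be a finite simple graph with positive integer edge weights, base ⊆ V a set of vertices, R a set of positive integers (radii) such that for all distinct vertices s,d of G in the same connected component there exists r ∈ R with r < d_G(s,d) ≤ 2r, and for each r ∈ R a set cover_r ⊆ V that intersects the vertex set of every shortest path P in G with r < |P| ≤ 2r whose vertex set is disjoint from base. Define hubs(u) = base ∪ ⋃_{r ∈ R} (N_{2r}^{G∖base}(u) ∩ cover_r) for each vertex u. Then for every pair of distinct vertices s,d of G in the same connected component and every shortest path P from s to d in G, the vertex set of P contains a vertex w lying in hubs(s) ∩ hubs(d). -/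
open SimpleGraph

lemma walkWeight_append {V : Type*} {G : SimpleGraph V} (wt : V → V → ℕ) {u v w : V}
    (p : G.Walk u v) (q : G.Walk v w) :
    walkWeight wt (p.append q) = walkWeight wt p + walkWeight wt q := by
  simp [walkWeight, SimpleGraph.Walk.darts_append]

lemma walkWeight_reverse {V : Type*} {G : SimpleGraph V} (wt : V → V → ℕ)
    (hsymm : ∀ a b, wt a b = wt b a) {u v : V} (p : G.Walk u v) :
    walkWeight wt p.reverse = walkWeight wt p := by
  simp only [walkWeight, SimpleGraph.Walk.darts_reverse, List.map_reverse, List.sum_reverse,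
    List.map_map]
  congr 1
  apply List.map_congr_left
  intro d _
  exact hsymm _ _

lemma wdist_le {V : Type*} {G : SimpleGraph V} (wt : V → V → ℕ) {u v : V}
    (p : G.Walk u v) : wdist G wt u v ≤ walkWeight wt p :=
  Nat.sInf_le ⟨p, rfl⟩

lemma lift_walk {V : Type*} {G : SimpleGraph V} (wt : V → V → ℕ) (S : Set V) {u v : V}
    (p : G.Walk u v) (h : ∀ x ∈ p.support, x ∉ S) :
    ∃ q : (delVerts G S).Walk u v, walkWeight wt q = walkWeight wt p := by
  induction p with
  | nil => exact ⟨SimpleGraph.Walk.nil, rfl⟩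
  | cons hadj p ih =>
    rename_i a b c
    obtain ⟨q, hq⟩ := ih (fun x hx => h x (by simp [hx]))
    refine ⟨SimpleGraph.Walk.cons ⟨hadj, h a (by simp), h b (by simp)⟩ q, ?_⟩
    simp [walkWeight] at hq ⊢
    exact congrArg (wt a b + ·) hq

theorem stmt1 {V : Type*} [Fintype V] (G : SimpleGraph V) (wt : V → V → ℕ)
    (hsymm : ∀ a b, wt a b = wt b a)
    (hpos : ∀ a b, G.Adj a b → 0 < wt a b)
    (base : Set V) (R : Set ℕ) (hRpos : ∀ r ∈ R, 0 < r)
    (hR : ∀ s d : V, s ≠ d → G.Reachable s d →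
      ∃ r ∈ R, r < wdist G wt s d ∧ wdist G wt s d ≤ 2 * r)
    (cover : ℕ → Set V)
    (hcover : ∀ r ∈ R, ∀ (a b : V) (P : G.Walk a b), P.IsPath →
      walkWeight wt P = wdist G wt a b →
      r < walkWeight wt P → walkWeight wt P ≤ 2 * r →
      (∀ x ∈ P.support, x ∉ base) →
      ∃ x ∈ P.support, x ∈ cover r)
    (s d : V) (hsd : s ≠ d) (hreach : G.Reachable s d)
    (P : G.Walk s d) (hP : P.IsPath) (hPw : walkWeight wt P = wdist G wt s d) :
    ∃ x ∈ P.support, x ∈ hubs G wt base R cover s ∩ hubs G wt base R cover d := by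
  classical
  by_cases hb : ∃ x ∈ P.support, x ∈ base
  · obtain ⟨x, hxs, hxb⟩ := hb
    exact ⟨x, hxs, Or.inl hxb, Or.inl hxb⟩
  · push_neg at hb
    obtain ⟨r, hrR, hr1, hr2⟩ := hR s d hsd hreach
    obtain ⟨x, hxs, hxc⟩ := hcover r hrR s d P hP hPw (hPw ▸ hr1) (hPw ▸ hr2) hb
    have hsplit := P.take_spec hxs
    have hw : walkWeight wt (P.takeUntil x hxs) + walkWeight wt (P.dropUntil x hxs)
        = walkWeight wt P := by
      rw [← walkWeight_append wt, hsplit]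
    have hwP : walkWeight wt P ≤ 2 * r := hPw ▸ hr2
    -- s side
    obtain ⟨q1, hq1⟩ := lift_walk wt base (P.takeUntil x hxs)
      (fun y hy => hb y (P.support_takeUntil_subset hxs hy))
    have hs1 : x ∈ ball G wt base s (2 * r) := by
      refine ⟨⟨q1⟩, le_trans (wdist_le wt q1) ?_⟩
      rw [hq1]
      omega
    -- d side
    obtain ⟨q2, hq2⟩ := lift_walk wt base (P.dropUntil x hxs).reverse
      (fun y hy => hb y (P.support_dropUntil_subset hxs
        ((SimpleGraph.Walk.support_reverse _) ▸ hy |> List.mem_reverse.mp)))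
    have hd1 : x ∈ ball G wt base d (2 * r) := by
      refine ⟨⟨q2⟩, le_trans (wdist_le wt q2) ?_⟩
      rw [hq2, walkWeight_reverse wt hsymm]
      omega
    refine ⟨x, hxs, Or.inr ?_, Or.inr ?_⟩ <;>
      exact Set.mem_biUnion hrR ⟨by assumption, hxc⟩
end
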